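/- Let u be a function analytic on the half-plane {z ∈ ℂ : Re z > 0}, continuous and bounded on {z ∈ ℂ : Re z ≥ 0, z ≠ 0}. Let r ≥ 0 and M > 0. If |e^{r²z} u(z)| ≤ M for all z with Re z = 0, z ≠ 0, and |e^{r²z} u(z)| ≤ M for all z ∈ (0,∞), then |u(z)| ≤ M exp(−r² Re z) for all z with Re z > 0. -/

import Mathlib

/-!
With `F z = exp (r² z) u z`, the claim is `‖F‖ ≤ M` on the open right half-plane. `F` is bounded by
`M` on both boundary rays and grows at most like `exp (r² ‖z‖)`, which is within reach of the
Phragmén–Lindelöf principle for the right half-plane (itself the principle for an angle, applied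
to the two quadrants). That principle needs continuity up to the boundary,
which may fail at the origin; so apply it to `(z / (z + ε)) • F z` instead: the damping factor is
holomorphic for `Re z > -ε`, has modulus at most `1` for `Re z ≥ 0`, kills the bounded function
`F` at `0`, and tends to `1` as `ε → 0`.
-/

open Complex Filter Topology Asymptotics

theorem Complex.norm_le_norm_add_ofReal {z : ℂ} (hz : 0 ≤ z.re) {ε : ℝ} (hε : 0 ≤ ε) :
    ‖z‖ ≤ ‖z + ε‖ := by
  rw [← sq_le_sq₀ (norm_nonneg _) (norm_nonneg _), ← normSq_eq_norm_sq, ← normSq_eq_norm_sq,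
    normSq_apply, normSq_apply]
  simp only [add_re, ofReal_re, add_im, ofReal_im, add_zero]
  nlinarith

theorem Complex.norm_div_add_ofReal_le_one {z : ℂ} (hz : 0 ≤ z.re) {ε : ℝ} (hε : 0 ≤ ε) :
    ‖z / (z + ε)‖ ≤ 1 := by
  rw [norm_div]
  exact div_le_one_of_le₀ (norm_le_norm_add_ofReal hz hε) (norm_nonneg _)

theorem Complex.add_ofReal_ne_zero {z : ℂ} (hz : 0 ≤ z.re) {ε : ℝ} (hε : 0 < ε) :
    z + ε ≠ 0 := fun h => by
  have := congrArg re h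
  simp only [add_re, ofReal_re, zero_re] at this
  linarith

theorem isBigO_exp_ofReal_mul_mul {a : ℝ} (ha : 0 ≤ a) {u : ℂ → ℂ} {s : Set ℂ} {B : ℝ}
    (hB : ∀ z ∈ s, ‖u z‖ ≤ B) :
    (fun z => exp (a * z) * u z) =O[𝓟 s] fun z => Real.exp (a * ‖z‖) := by
  refine IsBigO.of_bound B <| eventually_principal.2 fun z hz => ?_
  rw [norm_mul, norm_exp, re_ofReal_mul, Real.norm_of_nonneg (Real.exp_pos _).le, mul_comm B]
  gcongr
  · exact re_le_norm z
  · exact hB z hz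

section

variable {E : Type*} [NormedAddCommGroup E] [NormedSpace ℂ E] {f : ℂ → E}

theorem diffContOnCl_div_add_ofReal_smul {ε : ℝ} (hε : 0 < ε)
    (hd : DifferentiableOn ℂ f {z | 0 < z.re}) (hc : ContinuousOn f ({z | 0 ≤ z.re} \ {0}))
    (h0 : IsBoundedUnder (· ≤ ·) (𝓝[{z | 0 ≤ z.re} \ {0}] 0) (norm ∘ f)) :
    DiffContOnCl ℂ (fun z : ℂ => (z / (z + ε)) • f z) {z | 0 < z.re} := by
  have hne : ∀ z : ℂ, 0 ≤ z.re → z + ε ≠ 0 := fun z hz => add_ofReal_ne_zero hz hε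
  refine ⟨fun z hz => ?_, ?_⟩
  · exact (differentiableWithinAt_id.div (differentiableWithinAt_id.add_const (ε : ℂ))
      (hne z (le_of_lt hz))).smul (hd z hz)
  rw [closure_setOfPred_lt_re]
  intro z hz
  rcases eq_or_ne z 0 with rfl | hz0
  · rw [← continuousWithinAt_sdiff_self, ContinuousWithinAt, zero_div, zero_smul]
    refine Tendsto.zero_smul_isBoundedUnder_le ?_ h0
    have : ContinuousAt (fun z : ℂ => z / (z + ε)) 0 :=
      continuousAt_id.div (continuousAt_id.add continuousAt_const) (hne 0 le_rfl)
    simpa using this.tendsto.mono_left nhdsWithin_le_nhds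
  · have hdiv : ContinuousWithinAt (fun z : ℂ => z / (z + ε)) {z | 0 ≤ z.re} z :=
      continuousWithinAt_id.div (by fun_prop) (hne z hz)
    refine hdiv.smul ?_
    rw [← continuousWithinAt_sdiff_singleton (y := 0)]
    exact hc z ⟨hz, hz0⟩

theorem PhragmenLindelof.right_half_plane_of_bounded_on_real_of_bounded_near_zero {C : ℝ}
    (hd : DifferentiableOn ℂ f {z | 0 < z.re}) (hc : ContinuousOn f ({z | 0 ≤ z.re} \ {0}))
    (h0 : IsBoundedUnder (· ≤ ·) (𝓝[{z | 0 ≤ z.re} \ {0}] 0) (norm ∘ f))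
    (hexp : ∃ c < (2 : ℝ), ∃ B,
      f =O[Bornology.cobounded ℂ ⊓ 𝓟 {z | 0 < z.re}] fun z => Real.exp (B * ‖z‖ ^ c))
    (hre : IsBoundedUnder (· ≤ ·) atTop fun x : ℝ => ‖f x‖)
    (him : ∀ x : ℝ, x ≠ 0 → ‖f (x * I)‖ ≤ C) {z : ℂ} (hz : 0 ≤ z.re) (hz0 : z ≠ 0) :
    ‖f z‖ ≤ C := by
  have hC : 0 ≤ C := (norm_nonneg _).trans (him 1 one_ne_zero)
  have hdamped : ∀ ε > (0 : ℝ), ‖(z / (z + ε)) • f z‖ ≤ C := by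
    intro ε hε
    have hle : ∀ w : ℂ, 0 ≤ w.re → ‖(w / (w + ε)) • f w‖ ≤ ‖f w‖ := fun w hw => by
      rw [norm_smul]
      exact mul_le_of_le_one_left (norm_nonneg _) (norm_div_add_ofReal_le_one hw hε.le)
    refine PhragmenLindelof.right_half_plane_of_bounded_on_real
      (diffContOnCl_div_add_ofReal_smul hε hd hc h0) ?_ ?_ (fun x => ?_) hz
    · obtain ⟨c, hc, B, hO⟩ := hexp
      exact ⟨c, hc, B, (IsBigO.of_bound' <| eventually_inf_principal.2 <|
        Eventually.of_forall fun w hw => hle w (le_of_lt hw)).trans hO⟩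
    · exact hre.mono_le <| (eventually_ge_atTop 0).mono fun x hx => hle x (by simpa using hx)
    · rcases eq_or_ne x 0 with rfl | hx
      · simpa using hC
      · exact (hle _ (by simp)).trans (him x hx)
  have hlim : Tendsto (fun ε : ℝ => (z / (z + ε)) • f z) (𝓝[>] 0) (𝓝 (f z)) := by
    have : ContinuousAt (fun ε : ℝ => (z / (z + ε)) • f z) 0 := by fun_prop (disch := simpa)
    simpa [hz0] using this.tendsto.mono_left nhdsWithin_le_nhds
  exact le_of_tendsto hlim.norm (eventually_nhdsWithin_of_forall hdamped)

end

theorem phragmen_lindelof_halfplane_gaussian_general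
    (u : ℂ → ℂ) (r M : ℝ)
    (hanal : DifferentiableOn ℂ u {z : ℂ | 0 < z.re})
    (hcont : ContinuousOn u {z : ℂ | 0 ≤ z.re ∧ z ≠ 0})
    (hbdd : ∃ B : ℝ, ∀ z : ℂ, 0 ≤ z.re → z ≠ 0 → ‖u z‖ ≤ B)
    (him : ∀ z : ℂ, z.re = 0 → z ≠ 0 → ‖Complex.exp ((r ^ 2 : ℝ) * z) * u z‖ ≤ M)
    (hre : ∀ x : ℝ, 0 < x → ‖Complex.exp ((r ^ 2 : ℝ) * (x : ℂ)) * u (x : ℂ)‖ ≤ M) :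
    ∀ z : ℂ, 0 < z.re → ‖u z‖ ≤ M * Real.exp (-(r ^ 2) * z.re) := by
  obtain ⟨B, hB⟩ := hbdd
  set F : ℂ → ℂ := fun z => Complex.exp ((r ^ 2 : ℝ) * z) * u z
  have h0 : IsBoundedUnder (· ≤ ·) (𝓝[{z | 0 ≤ z.re} \ {0}] 0) (norm ∘ F) := by
    have hu : IsBoundedUnder (· ≤ ·) (𝓝[{z | 0 ≤ z.re} \ {0}] 0) (norm ∘ u) :=
      isBoundedUnder_of_eventually_le (eventually_nhdsWithin_of_forall fun z hz => hB z hz.1 hz.2)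
    have hE : Tendsto (fun z : ℂ => Complex.exp ((r ^ 2 : ℝ) * z))
        (𝓝[{z | 0 ≤ z.re} \ {0}] 0) (𝓝 1) :=
      (Continuous.tendsto' (by fun_prop) 0 1 (by simp)).mono_left nhdsWithin_le_nhds
    simpa [F, Function.comp_def] using (hE.isBigO_one ℝ).mul (hu.isBigO_one ℝ)
  have hgrowth : ∃ c < (2 : ℝ), ∃ B',
      F =O[Bornology.cobounded ℂ ⊓ 𝓟 {z | 0 < z.re}] fun z => Real.exp (B' * ‖z‖ ^ c) := by
    have hO := isBigO_exp_ofReal_mul_mul (sq_nonneg r) (s := {z | 0 < z.re})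
      fun z hz => hB z (le_of_lt hz) fun h => by simp [h] at hz
    exact ⟨1, one_lt_two, r ^ 2, by simpa only [Real.rpow_one] using hO.mono inf_le_right⟩
  intro z hz
  have hFz : ‖F z‖ ≤ M :=
    PhragmenLindelof.right_half_plane_of_bounded_on_real_of_bounded_near_zero
      ((by fun_prop : Differentiable ℂ _).differentiableOn.mul hanal)
      ((by fun_prop : Continuous _).continuousOn.mul hcont) h0 hgrowth
      (isBoundedUnder_of_eventually_le ((eventually_gt_atTop 0).mono hre))
      (fun x hx => him _ (by simp) (by simpa using hx)) hz.le (fun h => by simp [h] at hz)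
  rw [norm_mul, norm_exp, re_ofReal_mul] at hFz
  rwa [neg_mul, Real.exp_neg, ← div_eq_mul_inv, le_div_iff₀ (Real.exp_pos _), mul_comm]

/-- **The Phragmén–Lindelöf argument (anly).**  Let `u` be analytic on the half-plane
`{Re z > 0}` and continuous and bounded on `{Re z ≥ 0, z ≠ 0}`, and let `r ≥ 0`,
`M > 0`.  If `|e^{r²z} u(z)| ≤ M` on the imaginary axis (minus the origin) and on
the positive real axis, then `|u(z)| ≤ M exp(-r² Re z)` for all `Re z > 0`. -/
theorem phragmen_lindelof_halfplane_gaussian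
    (u : ℂ → ℂ) (r M : ℝ) (hr : 0 ≤ r) (hM : 0 < M)
    (hanal : DifferentiableOn ℂ u {z : ℂ | 0 < z.re})
    (hcont : ContinuousOn u {z : ℂ | 0 ≤ z.re ∧ z ≠ 0})
    (hbdd : ∃ B : ℝ, ∀ z : ℂ, 0 ≤ z.re → z ≠ 0 → ‖u z‖ ≤ B)
    (him : ∀ z : ℂ, z.re = 0 → z ≠ 0 → ‖Complex.exp ((r ^ 2 : ℝ) * z) * u z‖ ≤ M)
    (hre : ∀ x : ℝ, 0 < x → ‖Complex.exp ((r ^ 2 : ℝ) * (x : ℂ)) * u (x : ℂ)‖ ≤ M) :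
    ∀ z : ℂ, 0 < z.re → ‖u z‖ ≤ M * Real.exp (-(r ^ 2) * z.re) :=
  phragmen_lindelof_halfplane_gaussian_general u r M hanal hcont hbdd him hre
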